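/- arXiv:2510.24929 — 3 statements merged into one kernel-verified Lean document; each statement's English description precedes it below -/
import Mathlib

section
/- Let F : ℝ^d → ℝ have H-Lipschitz Hessian and define F_{μ,B}(x) := E_{b ∼ Uniform(B)}[F(x + μb)] with B the unit ball. Then ‖∇F_{μ,B}(x) − ∇F(x)‖ ≤ μ²H for all x. -/
open MeasureTheory

/-- The uniform probability measure on the closed unit ball in `ℝ^d`. -/
noncomputable def uniformBall (d : ℕ) : Measure (EuclideanSpace ℝ (Fin d)) :=
  (volume (Metric.closedBall (0 : EuclideanSpace ℝ (Fin d)) 1))⁻¹ •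
    volume.restrict (Metric.closedBall (0 : EuclideanSpace ℝ (Fin d)) 1)

section aux
variable (d : ℕ)

lemma uniformBall_vol_pos : 0 < volume (Metric.closedBall (0 : EuclideanSpace ℝ (Fin d)) 1) :=
  Metric.measure_closedBall_pos _ _ one_pos

lemma uniformBall_vol_lt_top : volume (Metric.closedBall (0 : EuclideanSpace ℝ (Fin d)) 1) < ⊤ :=
  measure_closedBall_lt_top

instance : IsProbabilityMeasure (uniformBall d) := by
  constructor
  rw [uniformBall, Measure.smul_apply, Measure.restrict_apply_univ, smul_eq_mul]
  exact ENNReal.inv_mul_cancel (uniformBall_vol_pos d).ne' (uniformBall_vol_lt_top d).ne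

lemma uniformBall_ae_mem : ∀ᵐ b ∂(uniformBall d), b ∈ Metric.closedBall (0 : EuclideanSpace ℝ (Fin d)) 1 := by
  rw [uniformBall]
  exact Measure.ae_smul_measure (ae_restrict_mem measurableSet_closedBall) _

lemma uniformBall_map_neg : Measure.map Neg.neg (uniformBall d) = uniformBall d := by
  rw [uniformBall, Measure.map_smul]
  congr 1
  have h1 : (Neg.neg ⁻¹' Metric.closedBall (0 : EuclideanSpace ℝ (Fin d)) 1)
      = Metric.closedBall 0 1 := by
    ext b; simp
  conv_rhs => rw [← Measure.map_neg_eq_self (volume : Measure (EuclideanSpace ℝ (Fin d))),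
    measurableEmbedding_neg.restrict_map, h1]

lemma uniformBall_integrable_id : Integrable (fun b : EuclideanSpace ℝ (Fin d) => b) (uniformBall d) := by
  rw [uniformBall]
  refine Integrable.smul_measure ?_ (by simp [(uniformBall_vol_pos d).ne'])
  exact (continuous_id.continuousOn.integrableOn_compact (isCompact_closedBall _ _))

lemma uniformBall_integral_id : ∫ b, b ∂(uniformBall d) = 0 := by
  have h := uniformBall_integrable_id d
  have h2 : ∫ b, b ∂(uniformBall d) = ∫ b, -b ∂(uniformBall d) := by
    have := integral_map (μ := uniformBall d) (φ := fun b : EuclideanSpace ℝ (Fin d) => -b)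
      (f := fun b : EuclideanSpace ℝ (Fin d) => b) measurable_neg.aemeasurable
      (by rw [uniformBall_map_neg]; exact h.1)
    rw [uniformBall_map_neg] at this
    exact this
  have := integral_neg (μ := uniformBall d) (f := fun b : EuclideanSpace ℝ (Fin d) => b)
  rw [this] at h2
  have h3 : (2:ℝ) • ∫ b, b ∂(uniformBall d) = 0 := by
    rw [two_smul]
    nth_rewrite 2 [h2]
    simp
  simpa using h3
end aux

/-- For `F` with `H`-Lipschitz Hessian and the ball-smoothed function
`G(x) = E_{b∼Unif(B)}[F(x+μb)]`, `‖∇G(x) − ∇F(x)‖ ≤ μ²H`. -/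
theorem ball_smoothed_gradient_error_hessian (d : ℕ) (F : EuclideanSpace ℝ (Fin d) → ℝ)
    (H μ : ℝ) (hH : 0 ≤ H) (hμ : 0 < μ)
    (hdiff : Differentiable ℝ F)
    (hess : EuclideanSpace ℝ (Fin d) →
      EuclideanSpace ℝ (Fin d) →L[ℝ] EuclideanSpace ℝ (Fin d))
    (hhess : ∀ x, HasFDerivAt (gradient F) (hess x) x)
    (hlip : ∀ x y : EuclideanSpace ℝ (Fin d), ‖hess x - hess y‖ ≤ H * ‖x - y‖)
    (G : EuclideanSpace ℝ (Fin d) → ℝ)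
    (hG : ∀ x, G x = ∫ b, F (x + μ • b) ∂(uniformBall d))
    (hGdiff : Differentiable ℝ G)
    (hinterchange : ∀ x, gradient G x = ∫ b, gradient F (x + μ • b) ∂(uniformBall d)) :
    ∀ x, ‖gradient G x - gradient F x‖ ≤ μ ^ 2 * H := by
  intro x
  set ν := uniformBall d with hν
  have hgraddiff : Differentiable ℝ (gradient F) := fun z => (hhess z).differentiableAt
  have hgradcont : Continuous (gradient F) := hgraddiff.continuous
  have hintcont : ∀ f : EuclideanSpace ℝ (Fin d) → EuclideanSpace ℝ (Fin d),
      Continuous f → Integrable f ν := by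
    intro f hf
    rw [hν, uniformBall]
    refine Integrable.smul_measure ?_ (by simp [(uniformBall_vol_pos d).ne'])
    exact hf.continuousOn.integrableOn_compact (isCompact_closedBall _ _)
  have h1 : Integrable (fun b => gradient F (x + μ • b)) ν :=
    hintcont _ (hgradcont.comp (continuous_const.add (continuous_id.const_smul μ)))
  have h2 : Integrable (fun b => (hess x) (μ • b)) ν :=
    hintcont _ ((hess x).continuous.comp (continuous_id.const_smul μ))
  have hconst : Integrable (fun _ : EuclideanSpace ℝ (Fin d) => gradient F x) ν :=
    integrable_const _
  have hμint : Integrable (fun b : EuclideanSpace ℝ (Fin d) => μ • b) ν :=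
    hintcont _ (continuous_id.const_smul μ)
  set g : EuclideanSpace ℝ (Fin d) → EuclideanSpace ℝ (Fin d) :=
    fun b => gradient F (x + μ • b) - gradient F x - (hess x) (μ • b) with hgdef
  -- key identity
  have hkey : gradient G x - gradient F x = ∫ b, g b ∂ν := by
    have e1 : ∫ b, g b ∂ν
        = (∫ b, (gradient F (x + μ • b) - gradient F x) ∂ν) - ∫ b, (hess x) (μ • b) ∂ν :=
      integral_sub (h1.sub hconst) h2
    have e2 : ∫ b, (gradient F (x + μ • b) - gradient F x) ∂ν
        = (∫ b, gradient F (x + μ • b) ∂ν) - ∫ b, gradient F x ∂ν := integral_sub h1 hconst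
    have e3 : ∫ b, (hess x) (μ • b) ∂ν = (hess x) (∫ b, μ • b ∂ν) :=
      ContinuousLinearMap.integral_comp_comm _ hμint
    have e4 : ∫ b : EuclideanSpace ℝ (Fin d), μ • b ∂ν = 0 := by
      rw [integral_smul, hν, uniformBall_integral_id, smul_zero]
    rw [e1, e2, e3, e4, integral_const]
    simp [hinterchange x, hν]
  -- pointwise bound on the ball
  have hbound : ∀ b ∈ Metric.closedBall (0 : EuclideanSpace ℝ (Fin d)) 1,
      ‖g b‖ ≤ μ ^ 2 * H := by
    intro b hb
    have hbnorm : ‖b‖ ≤ 1 := by simpa [Metric.mem_closedBall, dist_eq_norm] using hb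
    set y := x + μ • b with hy
    have hyx : y - x = μ • b := by rw [hy]; abel
    set r := ‖μ • b‖ with hr
    have hr0 : 0 ≤ r := norm_nonneg _
    have taylor : ‖gradient F y - gradient F x - (hess x) (y - x)‖ ≤ (H * r) * ‖y - x‖ := by
      refine (convex_closedBall x r).norm_image_sub_le_of_norm_hasFDerivWithin_le'
        (f' := hess) (fun z _ => (hhess z).hasFDerivWithinAt) ?_ ?_ ?_
      · intro z hz
        calc ‖hess z - hess x‖ ≤ H * ‖z - x‖ := hlip z x
          _ ≤ H * r := by
            have : ‖z - x‖ ≤ r := by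
              simpa [dist_eq_norm] using (Metric.mem_closedBall.mp hz)
            exact mul_le_mul_of_nonneg_left this hH
      · exact Metric.mem_closedBall_self hr0
      · simp [Metric.mem_closedBall, dist_eq_norm, hyx, hr]
    rw [hyx] at taylor
    have hrle : r ≤ μ := by
      rw [hr, norm_smul, Real.norm_eq_abs, abs_of_pos hμ]
      nlinarith
    calc ‖g b‖ = ‖gradient F y - gradient F x - (hess x) (μ • b)‖ := by rw [hgdef, hy]
      _ ≤ (H * r) * r := by simpa [hr] using taylor
      _ ≤ μ ^ 2 * H := by
          have h5 : H * (r * r) ≤ H * (μ * μ) :=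
            mul_le_mul_of_nonneg_left (mul_le_mul hrle hrle hr0 hμ.le) hH
          nlinarith [h5]
  have hae : ∀ᵐ b ∂ν, ‖g b‖ ≤ μ ^ 2 * H :=
    (uniformBall_ae_mem d).mono fun b hb => hbound b hb
  rw [hkey]
  calc ‖∫ b, g b ∂ν‖ ≤ (μ ^ 2 * H) * (ν Set.univ).toReal :=
      norm_integral_le_of_norm_le_const hae
    _ = μ ^ 2 * H := by simp
end

section
/- Let F : ℝ^d → ℝ have H-Lipschitz Hessian and define F_{μ,N}(x) := E_{u ∼ N(0,I)}[F(x + μu)]. Then ‖∇F_{μ,N}(x) − ∇F(x)‖ ≤ d μ² H for all x. -/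
open MeasureTheory ProbabilityTheory

/-- The standard Gaussian measure `N(0, I_d)` on `ℝ^d`. -/
noncomputable def stdGaussian (d : ℕ) : Measure (EuclideanSpace ℝ (Fin d)) :=
  (Measure.pi fun _ : Fin d => gaussianReal 0 1).map
    (MeasurableEquiv.toLp 2 (Fin d → ℝ))

section Aux
open Real
open scoped NNReal ENNReal

lemma integral_sq_exp_std : ∫ x : ℝ, x ^ 2 * Real.exp (-x ^ 2 / 2) = Real.sqrt (2 * π) := by
  have hb : (0:ℝ) < 1/2 := by norm_num
  have hint2 : Integrable fun x : ℝ => x ^ 2 * Real.exp (-(1/2) * x ^ 2) := by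
    have := integrable_rpow_mul_exp_neg_mul_sq hb (s := 2) (by norm_num)
    refine this.congr (Filter.Eventually.of_forall fun x => ?_)
    simp only []
    rw [show (x : ℝ) ^ (2:ℝ) = x ^ (2:ℕ) by rw [← Real.rpow_natCast]; norm_num]
  have hu : ∀ x : ℝ, HasDerivAt (fun y : ℝ => y) 1 x := fun x => hasDerivAt_id x
  have hv : ∀ x : ℝ, HasDerivAt (fun y : ℝ => -Real.exp (-(1/2) * y ^ 2))
      (x * Real.exp (-(1/2) * x ^ 2)) x := by
    intro x
    have h1 : HasDerivAt (fun y : ℝ => -(1/2) * y ^ 2) (-(1/2) * (2 * x)) x := by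
      simpa using ((hasDerivAt_pow 2 x).const_mul (-(1/2) : ℝ))
    have : HasDerivAt (fun y : ℝ => -Real.exp (-(1/2) * y ^ 2))
        (-(Real.exp (-(1/2) * x ^ 2) * (-(1/2) * (2 * x)))) x := (h1.exp).neg
    convert this using 1
    ring
  have key := integral_mul_deriv_eq_deriv_mul_of_integrable
    (u := fun y : ℝ => y) (v := fun y : ℝ => -Real.exp (-(1/2) * y ^ 2))
    (u' := fun _ => 1) (v' := fun x => x * Real.exp (-(1/2) * x ^ 2))
    (fun x _ => hu x) (fun x _ => hv x) ?_ ?_ ?_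
  · have : ∫ x : ℝ, x * (x * Real.exp (-(1/2) * x ^ 2)) =
        ∫ x : ℝ, Real.exp (-(1/2) * x ^ 2) := by
      rw [key, ← integral_neg]
      congr 1; funext x; ring
    calc ∫ x : ℝ, x ^ 2 * Real.exp (-x ^ 2 / 2)
        = ∫ x : ℝ, x * (x * Real.exp (-(1/2) * x ^ 2)) := by
          congr 1; funext x; ring_nf
      _ = ∫ x : ℝ, Real.exp (-(1/2) * x ^ 2) := this
      _ = Real.sqrt (π / (1/2)) := integral_gaussian _
      _ = Real.sqrt (2 * π) := by norm_num [mul_comm]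
  · refine hint2.congr (Filter.Eventually.of_forall fun x => ?_)
    simp [Pi.mul_apply]; ring
  · refine ((integrable_exp_neg_mul_sq hb).neg).congr (Filter.Eventually.of_forall fun x => ?_)
    simp [Pi.mul_apply]
  · refine ((integrable_mul_exp_neg_mul_sq hb).neg).congr (Filter.Eventually.of_forall fun x => ?_)
    simp [Pi.mul_apply]

lemma gaussianReal_eq_withDensity' : gaussianReal 0 1 =
    volume.withDensity (fun x => ((Real.toNNReal (gaussianPDFReal 0 1 x) : ℝ≥0) : ℝ≥0∞)) := by
  rw [gaussianReal_of_var_ne_zero _ one_ne_zero]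
  rfl

lemma pdf_std_eq (x : ℝ) :
    gaussianPDFReal 0 1 x = (Real.sqrt (2 * π))⁻¹ * Real.exp (-x^2/2) := by
  simp [gaussianPDFReal]

lemma integrable_sq_gaussianReal : Integrable (fun x : ℝ => x ^ 2) (gaussianReal 0 1) := by
  rw [gaussianReal_eq_withDensity',
    integrable_withDensity_iff_integrable_coe_smul ((measurable_gaussianPDFReal 0 1).real_toNNReal)]
  have hb : (0:ℝ) < 1/2 := by norm_num
  have hint2 : Integrable fun x : ℝ => x ^ 2 * Real.exp (-(1/2) * x ^ 2) := by
    have := integrable_rpow_mul_exp_neg_mul_sq hb (s := 2) (by norm_num)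
    refine this.congr (Filter.Eventually.of_forall fun x => ?_)
    simp only []
    rw [show (x : ℝ) ^ (2:ℝ) = x ^ (2:ℕ) by rw [← Real.rpow_natCast]; norm_num]
  refine (hint2.const_mul ((Real.sqrt (2 * π))⁻¹)).congr
    (Filter.Eventually.of_forall fun x => ?_)
  simp only [NNReal.smul_def, smul_eq_mul]
  rw [Real.coe_toNNReal _ (gaussianPDFReal_nonneg 0 1 x), pdf_std_eq]
  ring_nf

lemma integral_sq_gaussianReal : ∫ x : ℝ, x ^ 2 ∂(gaussianReal 0 1) = 1 := by
  rw [gaussianReal_eq_withDensity',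
    integral_withDensity_eq_integral_smul ((measurable_gaussianPDFReal 0 1).real_toNNReal)]
  have : ∫ x : ℝ, Real.toNNReal (gaussianPDFReal 0 1 x) • x ^ 2 =
      ∫ x : ℝ, (Real.sqrt (2 * π))⁻¹ * (x ^ 2 * Real.exp (-x ^ 2 / 2)) := by
    congr 1; funext x
    rw [NNReal.smul_def, smul_eq_mul, Real.coe_toNNReal _ (gaussianPDFReal_nonneg 0 1 x),
      pdf_std_eq]
    ring
  rw [this, integral_const_mul, integral_sq_exp_std, inv_mul_cancel₀]
  positivity

instance stdGaussian_isProb (d : ℕ) : IsProbabilityMeasure (stdGaussian d) :=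
  Measure.isProbabilityMeasure_map (MeasurableEquiv.toLp 2 (Fin d → ℝ)).measurable.aemeasurable



lemma measurePreserving_eval_gaussian (d : ℕ) (i : Fin d) :
    MeasurePreserving (Function.eval i) (Measure.pi fun _ : Fin d => gaussianReal 0 1)
      (gaussianReal 0 1) := by
  refine ⟨measurable_pi_apply i, ?_⟩
  ext s hs
  rw [Measure.map_apply (measurable_pi_apply i) hs, Set.eval_preimage, Measure.pi_pi]
  rw [Fintype.prod_eq_single i]
  · simp
  · intro j hj; simp [Function.update_of_ne hj]

lemma gaussianReal_map_neg' : (gaussianReal 0 1).map (fun x : ℝ => -x) = gaussianReal 0 1 := by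
  have h := gaussianReal_map_const_mul (μ := 0) (v := 1) (-1 : ℝ)
  simp only [neg_mul, one_mul, mul_zero] at h
  simpa using h

lemma measurePreserving_pi_neg (d : ℕ) :
    MeasurePreserving (fun v : Fin d → ℝ => -v)
      (Measure.pi fun _ : Fin d => gaussianReal 0 1)
      (Measure.pi fun _ : Fin d => gaussianReal 0 1) := by
  refine ⟨measurable_neg, ?_⟩
  refine (Measure.pi_eq fun s hs => ?_).symm
  rw [Measure.map_apply measurable_neg (MeasurableSet.univ_pi hs)]
  have hpre : (fun v : Fin d → ℝ => -v) ⁻¹' (Set.pi Set.univ s)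
      = Set.pi Set.univ (fun i => (fun x : ℝ => -x) ⁻¹' (s i)) := by
    ext v; simp [Set.mem_pi]
  rw [hpre, Measure.pi_pi]
  refine Finset.prod_congr rfl fun i _ => ?_
  rw [← Measure.map_apply measurable_neg (hs i), gaussianReal_map_neg']

lemma measurePreserving_neg_stdGaussian (d : ℕ) :
    MeasurePreserving (fun u : EuclideanSpace ℝ (Fin d) => -u) (stdGaussian d) (stdGaussian d) := by
  have he := (MeasurableEquiv.toLp 2 (Fin d → ℝ)).measurable
  refine ⟨measurable_neg, ?_⟩
  rw [_root_.stdGaussian, Measure.map_map measurable_neg he]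
  have : (fun u : EuclideanSpace ℝ (Fin d) => -u) ∘ (MeasurableEquiv.toLp 2 (Fin d → ℝ))
      = (MeasurableEquiv.toLp 2 (Fin d → ℝ)) ∘ (fun v : Fin d → ℝ => -v) := rfl
  rw [this, ← Measure.map_map he (measurePreserving_pi_neg d).measurable,
    (measurePreserving_pi_neg d).map_eq]

lemma integrable_eval_sq (d : ℕ) (i : Fin d) :
    Integrable (fun v : Fin d → ℝ => (v i) ^ 2) (Measure.pi fun _ => gaussianReal 0 1) :=
  ((measurePreserving_eval_gaussian d i).integrable_comp
    (continuous_pow 2).aestronglyMeasurable).mpr integrable_sq_gaussianReal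

lemma norm_sq_symm (d : ℕ) (v : Fin d → ℝ) :
    ‖(MeasurableEquiv.toLp 2 (Fin d → ℝ)) v‖ ^ 2 = ∑ i, (v i) ^ 2 := by
  rw [EuclideanSpace.norm_eq, Real.sq_sqrt (by positivity)]
  refine Finset.sum_congr rfl fun i _ => ?_
  rw [Real.norm_eq_abs, sq_abs]
  rfl

lemma integrable_norm_sq_stdGaussian (d : ℕ) :
    Integrable (fun u : EuclideanSpace ℝ (Fin d) => ‖u‖ ^ 2) (stdGaussian d) := by
  rw [_root_.stdGaussian, integrable_map_equiv (MeasurableEquiv.toLp 2 (Fin d → ℝ)) _]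
  have : ((fun u : EuclideanSpace ℝ (Fin d) => ‖u‖ ^ 2) ∘
      (MeasurableEquiv.toLp 2 (Fin d → ℝ))) = fun v => ∑ i, (v i) ^ 2 := by
    funext v; exact norm_sq_symm d v
  rw [this]
  exact integrable_finset_sum _ fun i _ => integrable_eval_sq d i

lemma integral_norm_sq_stdGaussian (d : ℕ) :
    ∫ u, ‖u‖ ^ 2 ∂(stdGaussian d) = d := by
  rw [_root_.stdGaussian, integral_map (f := fun u : EuclideanSpace ℝ (Fin d) => ‖u‖ ^ 2)
    (MeasurableEquiv.toLp 2 (Fin d → ℝ)).measurable.aemeasurable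
    (continuous_norm.pow 2).aestronglyMeasurable]
  simp_rw [norm_sq_symm d]
  rw [integral_finset_sum _ fun i _ => integrable_eval_sq d i]
  have heval : ∀ i : Fin d, ∫ v : Fin d → ℝ, (v i) ^ 2
      ∂(Measure.pi fun _ => gaussianReal 0 1) = 1 := by
    intro i
    have h1 := integral_map (μ := Measure.pi fun _ : Fin d => gaussianReal 0 1)
      (φ := Function.eval i) (f := fun x : ℝ => x ^ 2)
      (measurable_pi_apply i).aemeasurable
      (by rw [(measurePreserving_eval_gaussian d i).map_eq]
          exact (continuous_pow 2).aestronglyMeasurable)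
    rw [(measurePreserving_eval_gaussian d i).map_eq] at h1
    rw [← h1]
    exact integral_sq_gaussianReal
  simp [heval]

end Aux

/-- For `F` with `H`-Lipschitz Hessian and the Gaussian-smoothed function
`G(x) = E_{u∼N(0,I)}[F(x+μu)]`, `‖∇G(x) − ∇F(x)‖ ≤ d μ² H`. -/
theorem gaussian_smoothed_gradient_error_hessian (d : ℕ) (F : EuclideanSpace ℝ (Fin d) → ℝ)
    (H μ : ℝ) (hH : 0 ≤ H) (hμ : 0 < μ)
    (hdiff : Differentiable ℝ F)
    (hess : EuclideanSpace ℝ (Fin d) →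
      EuclideanSpace ℝ (Fin d) →L[ℝ] EuclideanSpace ℝ (Fin d))
    (hhess : ∀ x, HasFDerivAt (gradient F) (hess x) x)
    (hlip : ∀ x y : EuclideanSpace ℝ (Fin d), ‖hess x - hess y‖ ≤ H * ‖x - y‖)
    (G : EuclideanSpace ℝ (Fin d) → ℝ)
    (hG : ∀ x, G x = ∫ u, F (x + μ • u) ∂(stdGaussian d))
    (hGdiff : Differentiable ℝ G)
    (hinterchange : ∀ x, gradient G x = ∫ u, gradient F (x + μ • u) ∂(stdGaussian d)) :
    ∀ x, ‖gradient G x - gradient F x‖ ≤ d * μ ^ 2 * H := by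
  intro x
  have hgradcont : Continuous (gradient F) :=
    continuous_iff_continuousAt.2 fun y => (hhess y).differentiableAt.continuousAt
  -- Taylor bound
  have taylor : ∀ w : EuclideanSpace ℝ (Fin d), ‖gradient F (x + w) - gradient F x - hess x w‖ ≤ H * ‖w‖ ^ 2 := by
    intro w
    have hseg : Convex ℝ (segment ℝ x (x + w)) := convex_segment _ _
    have hmem : ∀ y ∈ segment ℝ x (x + w), ‖y - x‖ ≤ ‖w‖ := by
      intro y hy
      rw [segment_eq_image'] at hy
      obtain ⟨t, ht, rfl⟩ := hy
      simp only [add_sub_cancel_left]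
      rw [norm_smul, Real.norm_eq_abs, abs_of_nonneg ht.1]
      exact mul_le_of_le_one_left (norm_nonneg _) ht.2
    have key := hseg.norm_image_sub_le_of_norm_hasFDerivWithin_le
      (f := fun y => gradient F y - hess x y) (f' := fun y => hess y - hess x)
      (C := H * ‖w‖)
      (fun y _ => ((hhess y).sub ((hess x).hasFDerivAt)).hasFDerivWithinAt)
      (fun y hy => le_trans (hlip y x) (by
        have := hmem y hy
        nlinarith [norm_nonneg (y - x), norm_nonneg w]))
      (left_mem_segment ℝ x (x + w)) (right_mem_segment ℝ x (x + w))
    have h1 : (fun y => gradient F y - hess x y) (x + w)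
        - (fun y => gradient F y - hess x y) x
        = gradient F (x + w) - gradient F x - hess x w := by
      simp only
      rw [map_add]
      abel
    rw [h1] at key
    calc ‖gradient F (x + w) - gradient F x - hess x w‖
        ≤ H * ‖w‖ * ‖x + w - x‖ := key
      _ = H * ‖w‖ ^ 2 := by rw [add_sub_cancel_left]; ring
  -- the integrand and its integrability
  set g : EuclideanSpace ℝ (Fin d) → EuclideanSpace ℝ (Fin d) := fun u => gradient F (x + μ • u) with hgdef
  have hgcont : Continuous g := hgradcont.comp (continuous_const.add (continuous_const_smul μ))
  have normsmul : ∀ u : EuclideanSpace ℝ (Fin d), ‖μ • u‖ = μ * ‖u‖ := fun u => by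
    rw [norm_smul, Real.norm_eq_abs, abs_of_pos hμ]
  have hgbound : ∀ u : EuclideanSpace ℝ (Fin d),
      ‖g u‖ ≤ (‖gradient F x‖ + ‖hess x‖ * μ + H * μ ^ 2) * (1 + ‖u‖ ^ 2) := by
    intro u
    have ht := taylor (μ • u)
    have h2 : ‖g u‖ ≤ H * ‖μ • u‖ ^ 2 + (‖gradient F x‖ + ‖hess x (μ • u)‖) := by
      calc ‖g u‖ = ‖(g u - gradient F x - hess x (μ • u))
            + (gradient F x + hess x (μ • u))‖ := by congr 1; abel
        _ ≤ ‖g u - gradient F x - hess x (μ • u)‖ + ‖gradient F x + hess x (μ • u)‖ :=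
            norm_add_le _ _
        _ ≤ H * ‖μ • u‖ ^ 2 + (‖gradient F x‖ + ‖hess x (μ • u)‖) :=
            add_le_add ht (norm_add_le _ _)
    have h3 : ‖hess x (μ • u)‖ ≤ ‖hess x‖ * (μ * ‖u‖) := by
      refine le_trans ((hess x).le_opNorm _) ?_
      rw [normsmul u]
    have h4 : ‖μ • u‖ ^ 2 = μ ^ 2 * ‖u‖ ^ 2 := by rw [normsmul u]; ring
    have hu1 : ‖u‖ ≤ 1 + ‖u‖ ^ 2 := by nlinarith [norm_nonneg u, sq_nonneg (‖u‖ - 1)]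
    have hn : (0:ℝ) ≤ ‖hess x‖ := norm_nonneg _
    have hg0 : (0:ℝ) ≤ ‖gradient F x‖ := norm_nonneg _
    have hun : (0:ℝ) ≤ ‖u‖ := norm_nonneg u
    nlinarith [sq_nonneg (‖u‖ - 1), mul_nonneg hn hμ.le, sq_nonneg ‖u‖,
      mul_nonneg (mul_nonneg hn hμ.le) (sq_nonneg ‖u‖)]
  -- integrability of g
  have hboundint : Integrable (fun u : EuclideanSpace ℝ (Fin d) =>
      (‖gradient F x‖ + ‖hess x‖ * μ + H * μ ^ 2) * (1 + ‖u‖ ^ 2)) (stdGaussian d) :=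
    ((integrable_const (1:ℝ)).add (integrable_norm_sq_stdGaussian d)).const_mul _
  have hgint : Integrable g (stdGaussian d) :=
    Integrable.mono' hboundint hgcont.aestronglyMeasurable
      (Filter.Eventually.of_forall hgbound)
  -- neg symmetry
  have hgnegint : Integrable (fun u => g (-u)) (stdGaussian d) :=
    ((measurePreserving_neg_stdGaussian d).integrable_comp
      hgcont.aestronglyMeasurable).mpr hgint
  have hneg : ∫ u, g (-u) ∂(stdGaussian d) = ∫ u, g u ∂(stdGaussian d) :=
    (measurePreserving_neg_stdGaussian d).integral_comp
      (Homeomorph.neg (EuclideanSpace ℝ (Fin d))).measurableEmbedding g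
  -- the symmetrized error
  set s : EuclideanSpace ℝ (Fin d) → EuclideanSpace ℝ (Fin d) :=
    fun u => g u + g (-u) - (2:ℝ) • gradient F x with hsdef
  have hsint : Integrable s (stdGaussian d) := (hgint.add hgnegint).sub (integrable_const _)
  have hsbound : ∀ u, ‖s u‖ ≤ 2 * H * μ ^ 2 * ‖u‖ ^ 2 := by
    intro u
    have ht1 := taylor (μ • u)
    have ht2 := taylor (-(μ • u))
    have hrw : s u = (g u - gradient F x - hess x (μ • u))
        + (g (-u) - gradient F x - hess x (-(μ • u))) := by
      rw [hsdef]
      simp only [map_neg, smul_neg]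
      rw [two_smul]
      abel
    have hx2 : g (-u) = gradient F (x + -(μ • u)) := by rw [hgdef]; simp [smul_neg]
    rw [hrw]
    refine le_trans (norm_add_le _ _) ?_
    rw [hx2]
    have hb1 : ‖gradient F (x + μ • u) - gradient F x - hess x (μ • u)‖ ≤ H * (μ ^ 2 * ‖u‖ ^ 2) := by
      refine le_trans ht1 (le_of_eq ?_)
      rw [normsmul u]; ring
    have hb2 : ‖gradient F (x + -(μ • u)) - gradient F x - hess x (-(μ • u))‖
        ≤ H * (μ ^ 2 * ‖u‖ ^ 2) := by
      refine le_trans ht2 (le_of_eq ?_)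
      rw [norm_neg, normsmul u]; ring
    calc ‖gradient F (x + μ • u) - gradient F x - hess x (μ • u)‖
          + ‖gradient F (x + -(μ • u)) - gradient F x - hess x (-(μ • u))‖
        ≤ H * (μ ^ 2 * ‖u‖ ^ 2) + H * (μ ^ 2 * ‖u‖ ^ 2) := add_le_add hb1 hb2
      _ = 2 * H * μ ^ 2 * ‖u‖ ^ 2 := by ring
  -- integral of s
  have hconst : ∫ _ : EuclideanSpace ℝ (Fin d), ((2:ℝ) • gradient F x) ∂(stdGaussian d)
      = (2:ℝ) • gradient F x := by
    rw [integral_const, probReal_univ, one_smul]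
  have hIs : ∫ u, s u ∂(stdGaussian d)
      = (2:ℝ) • (gradient G x - gradient F x) := by
    have hadd : Integrable (fun u => g u + g (-u)) (stdGaussian d) := hgint.add hgnegint
    rw [hsdef]
    rw [integral_sub hadd (integrable_const _), integral_add hgint hgnegint,
      hconst, hneg, ← hinterchange x]
    module
  -- conclude
  have hnormIs : ‖∫ u, s u ∂(stdGaussian d)‖ ≤ 2 * H * μ ^ 2 * d := by
    refine le_trans (norm_integral_le_integral_norm s) ?_
    have : ∫ u, ‖s u‖ ∂(stdGaussian d) ≤ ∫ u, 2 * H * μ ^ 2 * ‖u‖ ^ 2 ∂(stdGaussian d) :=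
      integral_mono hsint.norm ((integrable_norm_sq_stdGaussian d).const_mul _)
        fun u => hsbound u
    refine le_trans this (le_of_eq ?_)
    rw [integral_const_mul, integral_norm_sq_stdGaussian d]
  have h2smul : ‖(2:ℝ) • (gradient G x - gradient F x)‖
      = 2 * ‖gradient G x - gradient F x‖ := by
    rw [norm_smul, Real.norm_eq_abs]; norm_num
  rw [hIs, h2smul] at hnormIs
  have : ‖gradient G x - gradient F x‖ ≤ H * μ ^ 2 * d := by linarith
  refine le_trans this (le_of_eq (by ring))
end

section
/- Let F : ℝ^d → ℝ be M-smooth with minimum value F* > −∞. Consider iterates x_{t+1} = x_t − η g_t for t = 0, ..., T with step size η ≤ 1/(4M), where g_t are arbitrary (possibly random) vectors. Then (1/(T+1)) ∑_{t=0}^T E[‖∇F(x_t)‖²] ≤ 4(F(x_0) − F*)/(η(T+1)) + (3/(T+1)) ∑_{t=0}^T E[‖∇F(x_t) − g_t‖²]. -/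
open MeasureTheory RealInnerProductSpace

private lemma descent_aux (A B C η τ : ℝ) (hη : 0 < η) (hτ : 0 < τ)
    (h : η * A ≤ 4 * C + 3 * η * B) :
    1 / τ * A ≤ 4 * C / (η * τ) + 3 / τ * B := by
  have hτη : 0 < η * τ := by positivity
  rw [show 4 * C / (η * τ) + 3 / τ * B = (4 * C + 3 * η * B) / (η * τ) by field_simp,
    show 1 / τ * A = (η * A) / (η * τ) by field_simp]
  gcongr

/-- Descent guarantee for Algorithm 1: for `M`-smooth `F` bounded below by `F*`, iterates
`x_{t+1} = x_t − η g_t` with `η ≤ 1/(4M)` satisfy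
`(1/(T+1)) ∑ E‖∇F(x_t)‖² ≤ 4(F(x_0) − F*)/(η(T+1)) + (3/(T+1)) ∑ E‖∇F(x_t) − g_t‖²`. -/
theorem descent_algorithm_gradient_bound {Ω : Type*} [MeasureSpace Ω]
    [IsProbabilityMeasure (volume : Measure Ω)]
    (d : ℕ) (F : EuclideanSpace ℝ (Fin d) → ℝ) (M η Fstar : ℝ)
    (hM : 0 < M) (hη : 0 < η) (hηM : η ≤ 1 / (4 * M))
    (hdiff : Differentiable ℝ F)
    (hsmooth : ∀ x y : EuclideanSpace ℝ (Fin d),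
      F y ≤ F x + ⟪gradient F x, y - x⟫ + M / 2 * ‖y - x‖ ^ 2)
    (hbelow : ∀ x, Fstar ≤ F x)
    (T : ℕ) (x0 : EuclideanSpace ℝ (Fin d))
    (g x : ℕ → Ω → EuclideanSpace ℝ (Fin d))
    (hx0 : ∀ ω, x 0 ω = x0)
    (hrec : ∀ t ω, x (t + 1) ω = x t ω - η • g t ω)
    (hint1 : ∀ t, Integrable (fun ω => ‖gradient F (x t ω)‖ ^ 2))
    (hint2 : ∀ t, Integrable (fun ω => ‖gradient F (x t ω) - g t ω‖ ^ 2)) :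
    (1 / (T + 1) : ℝ) * ∑ t ∈ Finset.range (T + 1), ∫ ω, ‖gradient F (x t ω)‖ ^ 2 ≤
      4 * (F x0 - Fstar) / (η * (T + 1)) +
        (3 / (T + 1)) * ∑ t ∈ Finset.range (T + 1),
          ∫ ω, ‖gradient F (x t ω) - g t ω‖ ^ 2 := by
  have hηM' : η * M ≤ 1 / 4 := by
    rw [le_div_iff₀ (by positivity)] at hηM
    nlinarith
  -- pointwise one-step descent
  have step : ∀ (p q : EuclideanSpace ℝ (Fin d)),
      F (p - η • q) ≤ F p - η / 4 * ‖gradient F p‖ ^ 2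
        + 3 * η / 4 * ‖gradient F p - q‖ ^ 2 := by
    intro p q
    have h := hsmooth p (p - η • q)
    have hsub : p - η • q - p = -(η • q) := by abel
    rw [hsub] at h
    set G := gradient F p with hG
    set e := G - q with he
    have hc : ⟪G, e⟫ ≤ ‖G‖ * ‖e‖ := real_inner_le_norm _ _
    have hcc : ‖G‖ * ‖e‖ ≤ (‖G‖ ^ 2 + ‖e‖ ^ 2) / 2 := by nlinarith [sq_nonneg (‖G‖ - ‖e‖)]
    have hinner : ⟪G, q⟫ = ‖G‖ ^ 2 - ⟪G, e⟫ := by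
      rw [he, inner_sub_right, real_inner_self_eq_norm_sq]; ring
    have hq : q = G - e := by rw [he]; abel
    have hnorm : ‖q‖ ^ 2 = ‖G‖ ^ 2 - 2 * ⟪G, e⟫ + ‖e‖ ^ 2 := by
      rw [hq, @norm_sub_sq_real]
    have hGn : ⟪G, -(η • q)⟫ = -η * ⟪G, q⟫ := by
      rw [inner_neg_right, real_inner_smul_right]; ring
    rw [hGn, norm_neg, norm_smul, Real.norm_eq_abs, abs_of_pos hη, mul_pow] at h
    rw [hinner, hnorm] at h
    have h1 : 0 ≤ η * (1 - M * η) := by nlinarith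
    have h2 : (0:ℝ) ≤ (‖G‖ ^ 2 + ‖e‖ ^ 2) / 2 - ⟪G, e⟫ := by linarith
    nlinarith [mul_nonneg h1 h2, mul_nonneg hη.le (sq_nonneg ‖G‖),
      mul_nonneg hη.le (sq_nonneg ‖e‖),
      mul_nonneg (mul_nonneg hM.le (sq_nonneg η)) (sq_nonneg ‖G‖),
      mul_nonneg (mul_nonneg hM.le (sq_nonneg η)) (sq_nonneg ‖e‖),
      sq_nonneg ‖G‖, sq_nonneg ‖e‖]
  -- telescoped pointwise bound
  have tel : ∀ ω n, ∑ t ∈ Finset.range n,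
      (η / 4 * ‖gradient F (x t ω)‖ ^ 2 - 3 * η / 4 * ‖gradient F (x t ω) - g t ω‖ ^ 2)
      ≤ F x0 - F (x n ω) := by
    intro ω n
    induction n with
    | zero => simp [hx0 ω]
    | succ n ih =>
      rw [Finset.sum_range_succ]
      have h1 := step (x n ω) (g n ω)
      rw [← hrec n ω] at h1
      linarith
  have telT : ∀ ω, ∑ t ∈ Finset.range (T + 1),
      (η / 4 * ‖gradient F (x t ω)‖ ^ 2 - 3 * η / 4 * ‖gradient F (x t ω) - g t ω‖ ^ 2)
      ≤ F x0 - Fstar := fun ω => le_trans (tel ω (T + 1)) (by linarith [hbelow (x (T + 1) ω)])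
  -- integrate
  have hintf : Integrable (fun ω => ∑ t ∈ Finset.range (T + 1),
      (η / 4 * ‖gradient F (x t ω)‖ ^ 2 - 3 * η / 4 * ‖gradient F (x t ω) - g t ω‖ ^ 2)) := by
    apply integrable_finset_sum
    intro t _
    exact ((hint1 t).const_mul _).sub ((hint2 t).const_mul _)
  have hIle : (∫ ω, ∑ t ∈ Finset.range (T + 1),
      (η / 4 * ‖gradient F (x t ω)‖ ^ 2 - 3 * η / 4 * ‖gradient F (x t ω) - g t ω‖ ^ 2))
      ≤ F x0 - Fstar := by
    calc _ ≤ ∫ _ : Ω, (F x0 - Fstar) := integral_mono hintf (integrable_const _) telT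
    _ = F x0 - Fstar := by simp
  have heq := integral_finset_sum (μ := (volume : Measure Ω)) (Finset.range (T + 1))
    (f := fun t ω => η / 4 * ‖gradient F (x t ω)‖ ^ 2
      - 3 * η / 4 * ‖gradient F (x t ω) - g t ω‖ ^ 2)
    (fun t _ => ((hint1 t).const_mul _).sub ((hint2 t).const_mul _))
  rw [heq] at hIle
  have hIle' : ∑ t ∈ Finset.range (T + 1),
      (η / 4 * (∫ ω, ‖gradient F (x t ω)‖ ^ 2)
        - 3 * η / 4 * ∫ ω, ‖gradient F (x t ω) - g t ω‖ ^ 2) ≤ F x0 - Fstar := by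
    refine le_trans (le_of_eq ?_) hIle
    refine Finset.sum_congr rfl fun t _ => ?_
    rw [integral_sub ((hint1 t).const_mul _) ((hint2 t).const_mul _),
      integral_const_mul, integral_const_mul]
  rw [Finset.sum_sub_distrib, ← Finset.mul_sum, ← Finset.mul_sum] at hIle'
  set A := ∑ t ∈ Finset.range (T + 1), ∫ ω, ‖gradient F (x t ω)‖ ^ 2 with hA
  set B := ∑ t ∈ Finset.range (T + 1), ∫ ω, ‖gradient F (x t ω) - g t ω‖ ^ 2 with hB
  have hT : (0 : ℝ) < (T : ℝ) + 1 := by positivity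
  have hpos : (0:ℝ) < η * ((T : ℝ) + 1) := by positivity
  have h2 : η * A ≤ 4 * (F x0 - Fstar) + 3 * η * B := by linarith
  exact descent_aux A B (F x0 - Fstar) η ((T:ℝ)+1) hη hT h2
end
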